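/- There exist K > 0 and α₁ ∈ (0,1) such that for all α ∈ (0,α₁): |ρ₋(α) − (iπ/2 + (1−i)·√α)| ≤ K·α and |ρ₊(α) − (iπ/2 − (1−i)·√α)| ≤ K·α. Moreover there exist K′ > 0 and α₂ ∈ (0,1) such that for all α ∈ (α₂,1): |ρ₋(α) − (ln(1+√2) + i·√(1−α))| ≤ K′·(1−α) and |ρ₊(α) − (−ln(1+√2) + iπ − i·√(1−α))| ≤ K′·(1−α). -/
import Mathlib

noncomputable section

open Filter Set Topology

/-- `ρ` is the solution of `sinh u = α + i√(1−α²)` with `0 < Im ρ < π/2` (the singularity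
closest to the real axis). -/
def IsRhoMinus (α : ℝ) (ρ : ℂ) : Prop :=
  Complex.sinh ρ = (α : ℂ) + Complex.I * (Real.sqrt (1 - α ^ 2) : ℂ) ∧
    0 < ρ.im ∧ ρ.im < Real.pi / 2

/-- `ρ` is the solution of `sinh u = α + i√(1−α²)` with `π/2 < Im ρ < π`. -/
def IsRhoPlus (α : ℝ) (ρ : ℂ) : Prop :=
  Complex.sinh ρ = (α : ℂ) + Complex.I * (Real.sqrt (1 - α ^ 2) : ℂ) ∧
    Real.pi / 2 < ρ.im ∧ ρ.im < Real.pi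

namespace RhoAux

open Real Complex

/-! ### Injectivity of `sinh` on the strip -/

lemma sinh_inj_strip {u v : ℂ} (h : Complex.sinh u = Complex.sinh v)
    (hu0 : 0 < u.im) (huπ : u.im < π) (hv0 : 0 < v.im) (hvπ : v.im < π)
    (hsum : u.im + v.im ≠ π) : u = v := by
  have hs : Complex.sin (u * Complex.I) = Complex.sin (v * Complex.I) := by
    rw [Complex.sin_mul_I, Complex.sin_mul_I, h]
  have h0 : 2 * Complex.sin ((u * Complex.I - v * Complex.I) / 2) *
      Complex.cos ((u * Complex.I + v * Complex.I) / 2) = 0 := by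
    rw [← Complex.sin_sub_sin, hs, sub_self]
  rcases mul_eq_zero.1 h0 with h1 | h1
  · rcases mul_eq_zero.1 h1 with h2 | h2
    · norm_num at h2
    · rcases Complex.sin_eq_zero_iff.1 h2 with ⟨k, hk⟩
      have hd : u - v = ((-(2 * (k:ℝ) * π) : ℝ) : ℂ) * Complex.I := by
        push_cast
        linear_combination (-2*Complex.I) * hk + (u - v) * Complex.I_sq
      have him : u.im - v.im = -(2 * (k:ℝ) * π) := by
        have := congrArg Complex.im hd
        simpa using this
      have hk0 : k = 0 := by
        have h1' : -1 < 2*(k:ℝ) ∧ 2*(k:ℝ) < 1 := by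
          constructor <;> nlinarith [Real.pi_pos]
        have : -1 < 2*k ∧ 2*k < 1 := by exact_mod_cast h1'
        omega
      rw [hk0] at hd
      push_cast at hd
      simpa [sub_eq_zero] using hd
  · rcases Complex.cos_eq_zero_iff.1 h1 with ⟨k, hk⟩
    have hd : u + v = ((-((2 * (k:ℝ) + 1) * π) : ℝ) : ℂ) * Complex.I := by
      push_cast
      linear_combination (-2*Complex.I) * hk + (u + v) * Complex.I_sq
    have him : u.im + v.im = -((2 * (k:ℝ) + 1) * π) := by
      have := congrArg Complex.im hd
      simpa using this
    exfalso
    have hk1 : (0:ℝ) < -(2*(k:ℝ)+1) ∧ -(2*(k:ℝ)+1) < 2 := by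
      constructor <;> nlinarith [Real.pi_pos]
    have : 0 < -(2*k+1) ∧ -(2*k+1) < 2 := by exact_mod_cast hk1
    have hkm : k = -1 := by omega
    rw [hkm] at him
    push_cast at him
    apply hsum
    linarith [him]

/-! ### The explicit solution -/

noncomputable def rhoM (α : ℝ) : ℂ :=
  (Real.arsinh (Real.sqrt α) : ℂ) + (Real.arccos (Real.sqrt α) : ℂ) * Complex.I

lemma rhoM_im (α : ℝ) : (rhoM α).im = Real.arccos (Real.sqrt α) := by simp [rhoM]

lemma isRhoMinus_rhoM (α : ℝ) (h0 : 0 < α) (h1 : α < 1) : IsRhoMinus α (rhoM α) := by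
  have ht0 : 0 < Real.sqrt α := Real.sqrt_pos.2 h0
  have ht1 : Real.sqrt α < 1 := by
    rw [show (1:ℝ) = Real.sqrt 1 by simp]
    exact Real.sqrt_lt_sqrt h0.le h1
  have htsq : Real.sqrt α ^ 2 = α := Real.sq_sqrt h0.le
  refine ⟨?_, ?_, ?_⟩
  · rw [rhoM, Complex.sinh_add, Complex.sinh_mul_I, Complex.cosh_mul_I,
      ← Complex.ofReal_sinh, ← Complex.ofReal_cosh, ← Complex.ofReal_cos, ← Complex.ofReal_sin,
      Real.sinh_arsinh, Real.cosh_arsinh, Real.cos_arccos (by linarith) ht1.le,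
      Real.sin_arccos, htsq]
    have e1 : Real.sqrt α * Real.sqrt α = α := Real.mul_self_sqrt h0.le
    have e2 : Real.sqrt (1 + α) * Real.sqrt (1 - α) = Real.sqrt (1 - α^2) := by
      rw [← Real.sqrt_mul (by linarith)]
      ring_nf
    rw [show ((Real.sqrt α : ℂ)) * (Real.sqrt α : ℂ) = (α:ℂ) by
      exact_mod_cast congrArg Complex.ofReal e1]
    rw [show ((Real.sqrt (1+α) : ℂ)) * ((Real.sqrt (1-α) : ℂ) * Complex.I)
        = ((Real.sqrt (1-α^2) : ℝ):ℂ) * Complex.I by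
      rw [← mul_assoc]; congr 1; exact_mod_cast congrArg Complex.ofReal e2]
    ring
  · simpa [rhoM] using Real.arccos_pos.2 ht1
  · simpa [rhoM] using Real.arccos_lt_pi_div_two.2 ht0

lemma sinh_pi_I_sub (z : ℂ) : Complex.sinh ((Real.pi : ℂ) * Complex.I - z) = Complex.sinh z := by
  rw [Complex.sinh_sub, Complex.sinh_mul_I, Complex.cosh_mul_I,
    ← Complex.ofReal_sin, ← Complex.ofReal_cos, Real.sin_pi, Real.cos_pi]
  push_cast
  ring

lemma eq_rhoM {α : ℝ} {ρ : ℂ} (h0 : 0 < α) (h1 : α < 1) (hρ : IsRhoMinus α ρ) :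
    ρ = rhoM α := by
  obtain ⟨hs, hi0, hiπ⟩ := hρ
  obtain ⟨hs', hi0', hiπ'⟩ := isRhoMinus_rhoM α h0 h1
  have hπ : (0:ℝ) < π := Real.pi_pos
  exact sinh_inj_strip (hs.trans hs'.symm) hi0 (by linarith) hi0' (by linarith)
    (by intro h; linarith)

lemma eq_rhoP {α : ℝ} {ρ : ℂ} (h0 : 0 < α) (h1 : α < 1) (hρ : IsRhoPlus α ρ) :
    ρ = (Real.pi : ℂ) * Complex.I - rhoM α := by
  obtain ⟨hs, hi0, hiπ⟩ := hρ
  obtain ⟨hs', hi0', hiπ'⟩ := isRhoMinus_rhoM α h0 h1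
  have hπ : (0:ℝ) < π := Real.pi_pos
  have him : ((Real.pi : ℂ) * Complex.I - rhoM α).im = π - (rhoM α).im := by simp
  refine sinh_inj_strip (by rw [hs, sinh_pi_I_sub, hs']) (by linarith) hiπ ?_ ?_ ?_
  · rw [him]; linarith
  · rw [him]; linarith
  · rw [him]; intro h; linarith

/-! ### Elementary estimates -/

lemma abs_arsinh_sub_le {t : ℝ} (h0 : 0 ≤ t) :
    |Real.arsinh t - t| ≤ t ^ 3 := by
  have key : ∀ x ∈ Set.Icc (0:ℝ) t, ‖(Real.sqrt (1 + x^2))⁻¹ - 1‖ ≤ t^2 := by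
    intro x hx
    obtain ⟨hx0, hxt⟩ := hx
    set r := Real.sqrt (1 + x^2) with hr
    have hrsq : r^2 = 1 + x^2 := Real.sq_sqrt (by positivity)
    have hrpos : 0 < r := Real.sqrt_pos.2 (by positivity)
    have hr1 : 1 ≤ r := by nlinarith
    have hinv1 : (r:ℝ)⁻¹ ≤ 1 := by rw [inv_le_one_iff₀]; right; exact hr1
    have hrle : r ≤ 1 + x^2 := by nlinarith
    have hlow : 1 - x^2 ≤ r⁻¹ := by
      have hm : (1-x^2)*r ≤ 1 := by nlinarith
      calc 1 - x^2 = ((1-x^2)*r)*r⁻¹ := by field_simp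
        _ ≤ 1 * r⁻¹ := mul_le_mul_of_nonneg_right hm (by positivity)
        _ = r⁻¹ := one_mul _
    have hxt2 : x^2 ≤ t^2 := by nlinarith
    rw [Real.norm_eq_abs, abs_le]
    constructor <;> nlinarith
  have hd : ∀ x ∈ Set.Icc (0:ℝ) t,
      HasDerivWithinAt (fun s => Real.arsinh s - s) ((Real.sqrt (1 + x^2))⁻¹ - 1)
        (Set.Icc 0 t) x :=
    fun x _ => ((Real.hasDerivAt_arsinh x).sub (hasDerivAt_id x)).hasDerivWithinAt
  have := (convex_Icc (0:ℝ) t).norm_image_sub_le_of_norm_hasDerivWithin_le hd key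
    (Set.left_mem_Icc.2 h0) (Set.right_mem_Icc.2 h0)
  simp only [Real.arsinh_zero, sub_zero, Real.norm_eq_abs] at this
  calc |Real.arsinh t - t| ≤ t^2 * |t| := this
    _ = t^3 := by rw [_root_.abs_of_nonneg h0]; ring

lemma abs_arcsin_sub_le {t : ℝ} (h0 : 0 ≤ t) (h1 : t ≤ 1/2) :
    |Real.arcsin t - t| ≤ 2 * t ^ 3 := by
  have key : ∀ x ∈ Set.Icc (0:ℝ) t, ‖1 / (Real.sqrt (1 - x^2)) - 1‖ ≤ 2 * t^2 := by
    intro x hx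
    obtain ⟨hx0, hxt⟩ := hx
    have hxh : x ≤ 1/2 := le_trans hxt h1
    set r := Real.sqrt (1 - x^2) with hr
    have hrsq : r^2 = 1 - x^2 := Real.sq_sqrt (by nlinarith)
    have hrpos : 0 < r := Real.sqrt_pos.2 (by nlinarith)
    have hrle1 : r ≤ 1 := by nlinarith
    have hrge : 1 - x^2 ≤ r := by nlinarith
    have hup : 1 / r ≤ 1 + 2*x^2 := by
      rw [div_le_iff₀ hrpos]
      have h4 : x^2 ≤ 1/4 := by nlinarith
      nlinarith [mul_le_mul_of_nonneg_left hrge (by positivity : (0:ℝ) ≤ 1+2*x^2),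
        sq_nonneg x, h4]
    have hlo : 1 ≤ 1 / r := by
      rw [le_div_iff₀ hrpos]; linarith
    have hxt2 : x^2 ≤ t^2 := by nlinarith
    rw [Real.norm_eq_abs, abs_le]
    constructor <;> nlinarith
  have hd : ∀ x ∈ Set.Icc (0:ℝ) t,
      HasDerivWithinAt (fun s => Real.arcsin s - s) (1 / (Real.sqrt (1 - x^2)) - 1)
        (Set.Icc 0 t) x := by
    intro x hx
    obtain ⟨hx0, hxt⟩ := hx
    exact ((Real.hasDerivAt_arcsin (by intro h; rw [h] at hx0; linarith)
      (by intro h; rw [h] at hxt; linarith)).sub (hasDerivAt_id x)).hasDerivWithinAt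
  have := (convex_Icc (0:ℝ) t).norm_image_sub_le_of_norm_hasDerivWithin_le hd key
    (Set.left_mem_Icc.2 h0) (Set.right_mem_Icc.2 h0)
  simp only [Real.arcsin_zero, sub_zero, Real.norm_eq_abs] at this
  calc |Real.arcsin t - t| ≤ 2*t^2 * |t| := this
    _ = 2*t^3 := by rw [_root_.abs_of_nonneg h0]; ring

lemma abs_arsinh_sub_arsinh_one {a : ℝ} (h1 : a ≤ 1) :
    |Real.arsinh a - Real.arsinh 1| ≤ 1 - a := by
  have key : ∀ x ∈ Set.Icc a 1, ‖(Real.sqrt (1 + x^2))⁻¹‖ ≤ 1 := by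
    intro x _
    have h1' : 1 ≤ Real.sqrt (1 + x^2) := by
      calc (1:ℝ) = Real.sqrt 1 := by simp
        _ ≤ Real.sqrt (1 + x^2) := Real.sqrt_le_sqrt (by nlinarith)
    rw [Real.norm_eq_abs, _root_.abs_of_nonneg (by positivity), inv_le_one_iff₀]
    right; exact h1'
  have hd : ∀ x ∈ Set.Icc a 1,
      HasDerivWithinAt Real.arsinh ((Real.sqrt (1 + x^2))⁻¹) (Set.Icc a 1) x :=
    fun x _ => (Real.hasDerivAt_arsinh x).hasDerivWithinAt
  have := (convex_Icc a 1).norm_image_sub_le_of_norm_hasDerivWithin_le hd key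
    (Set.right_mem_Icc.2 h1) (Set.left_mem_Icc.2 h1)
  rw [Real.norm_eq_abs, Real.norm_eq_abs, one_mul,
    show |a - (1:ℝ)| = 1 - a by rw [abs_sub_comm]; exact _root_.abs_of_nonneg (by linarith)] at this
  exact this

lemma arsinh_one_eq : Real.arsinh 1 = Real.log (1 + Real.sqrt 2) := by
  unfold Real.arsinh; norm_num

lemma norm_add_mul_I_le (a b : ℝ) : ‖(a:ℂ) + (b:ℂ) * Complex.I‖ ≤ |a| + |b| := by
  have := Complex.norm_le_abs_re_add_abs_im ((a:ℂ) + (b:ℂ) * Complex.I)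
  simpa using this

end RhoAux

/-- asymptotics of the singularities `ρ₋(α), ρ₊(α)` as `α → 0` and as `α → 1`. -/
theorem stmt1 :
    (∃ K > (0 : ℝ), ∃ α₁ : ℝ, 0 < α₁ ∧ α₁ < 1 ∧
      ∀ α : ℝ, 0 < α → α < α₁ → ∀ ρm ρp : ℂ, IsRhoMinus α ρm → IsRhoPlus α ρp →
        ‖ρm - (Complex.I * (Real.pi / 2 : ℝ) + (1 - Complex.I) * (Real.sqrt α : ℂ))‖ ≤ K * α ∧
        ‖ρp - (Complex.I * (Real.pi / 2 : ℝ) - (1 - Complex.I) * (Real.sqrt α : ℂ))‖ ≤ K * α) ∧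
    (∃ K' > (0 : ℝ), ∃ α₂ : ℝ, 0 < α₂ ∧ α₂ < 1 ∧
      ∀ α : ℝ, α₂ < α → α < 1 → ∀ ρm ρp : ℂ, IsRhoMinus α ρm → IsRhoPlus α ρp →
        ‖ρm - ((Real.log (1 + Real.sqrt 2) : ℂ) + Complex.I * (Real.sqrt (1 - α) : ℂ))‖
            ≤ K' * (1 - α) ∧
        ‖ρp - (-(Real.log (1 + Real.sqrt 2) : ℂ) + (Real.pi : ℂ) * Complex.I
            - Complex.I * (Real.sqrt (1 - α) : ℂ))‖ ≤ K' * (1 - α)) := by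
  open RhoAux Real in
  constructor
  · refine ⟨3, by norm_num, 1/4, by norm_num, by norm_num, ?_⟩
    intro α hα0 hα1 ρm ρp hm hp
    have hα1' : α < 1 := by linarith
    set t := Real.sqrt α with ht
    have ht0 : 0 < t := Real.sqrt_pos.2 hα0
    have htsq : t^2 = α := Real.sq_sqrt hα0.le
    have hthalf : t ≤ 1/2 := by nlinarith
    have hme := eq_rhoM hα0 hα1' hm
    have hpe := eq_rhoP hα0 hα1' hp
    have hzm : ρm - (Complex.I * (Real.pi / 2 : ℝ) + (1 - Complex.I) * (t : ℂ))
        = ((Real.arsinh t - t : ℝ) : ℂ) + ((t - Real.arcsin t : ℝ) : ℂ) * Complex.I := by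
      rw [hme, rhoM, Real.arccos_eq_pi_div_two_sub_arcsin]
      push_cast
      ring
    have hb : ‖((Real.arsinh t - t : ℝ) : ℂ) + ((t - Real.arcsin t : ℝ) : ℂ) * Complex.I‖
        ≤ 3 * α := by
      refine le_trans (norm_add_mul_I_le _ _) ?_
      have h1 := abs_arsinh_sub_le ht0.le
      have h2 := abs_arcsin_sub_le ht0.le hthalf
      rw [abs_sub_comm t (Real.arcsin t)]
      have ht3 : t^3 ≤ α := by nlinarith
      linarith
    refine ⟨by rw [hzm]; exact hb, ?_⟩
    have hzp : ρp - (Complex.I * (Real.pi / 2 : ℝ) - (1 - Complex.I) * (t : ℂ))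
        = -(((Real.arsinh t - t : ℝ) : ℂ) + ((t - Real.arcsin t : ℝ) : ℂ) * Complex.I) := by
      rw [hpe, rhoM, Real.arccos_eq_pi_div_two_sub_arcsin]
      push_cast
      ring
    rw [hzp, norm_neg]
    exact hb
  · refine ⟨3, by norm_num, 3/4, by norm_num, by norm_num, ?_⟩
    intro α hα0 hα1 ρm ρp hm hp
    have hα0' : 0 < α := by linarith
    set t := Real.sqrt α with ht
    set u := Real.sqrt (1 - α) with hu
    have ht0 : 0 < t := Real.sqrt_pos.2 hα0'
    have htsq : t^2 = α := Real.sq_sqrt hα0'.le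
    have ht1 : t ≤ 1 := by nlinarith
    have hu0 : 0 ≤ u := Real.sqrt_nonneg _
    have husq : u^2 = 1 - α := Real.sq_sqrt (by linarith)
    have huhalf : u ≤ 1/2 := by nlinarith
    have hme := eq_rhoM hα0' hα1 hm
    have hpe := eq_rhoP hα0' hα1 hp
    have harc : Real.arccos t = Real.arcsin u := by
      rw [Real.arccos_eq_arcsin (Real.sqrt_nonneg α), htsq]
    have hzm : ρm - ((Real.log (1 + Real.sqrt 2) : ℂ) + Complex.I * (u : ℂ))
        = ((Real.arsinh t - Real.arsinh 1 : ℝ) : ℂ)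
          + ((Real.arcsin u - u : ℝ) : ℂ) * Complex.I := by
      rw [hme, rhoM, harc, ← arsinh_one_eq]
      push_cast
      ring
    have hb : ‖((Real.arsinh t - Real.arsinh 1 : ℝ) : ℂ)
        + ((Real.arcsin u - u : ℝ) : ℂ) * Complex.I‖ ≤ 3 * (1 - α) := by
      refine le_trans (norm_add_mul_I_le _ _) ?_
      have h1 := abs_arsinh_sub_arsinh_one ht1
      have h2 := abs_arcsin_sub_le hu0 huhalf
      have htα : α ≤ t := by nlinarith
      have hu3 : u^3 ≤ 1 - α := by nlinarith
      linarith
    refine ⟨by rw [hzm]; exact hb, ?_⟩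
    have hzp : ρp - (-(Real.log (1 + Real.sqrt 2) : ℂ) + (Real.pi : ℂ) * Complex.I
          - Complex.I * (u : ℂ))
        = -(((Real.arsinh t - Real.arsinh 1 : ℝ) : ℂ)
          + ((Real.arcsin u - u : ℝ) : ℂ) * Complex.I) := by
      rw [hpe, rhoM, harc, ← arsinh_one_eq]
      push_cast
      ring
    rw [hzp, norm_neg]
    exact hb
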